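/- arXiv:1705.10087 — 3 statements merged into one kernel-verified Lean document; each statement's English description precedes it below -/
import Mathlib

section
/- Let Z, Z⁽¹⁾ be functions from coordinate pairs to ℝ agreeing everywhere except at one coordinate (k₀,t₀), where Z⁽¹⁾ takes value u. For the convolutional sparse coding cost E(Z) = (1/2)‖X - Σ_k Z_k * D_k‖₂² + λ Σ_k ‖Z_k‖₁, the cost variation satisfies E(Z) - E(Z⁽¹⁾) = (‖D_{k₀}‖₂²/2)(Z_{k₀}[t₀]² - u²) - β_{k₀}[t₀](Z_{k₀}[t₀] - u) + λ(|Z_{k₀}[t₀]| - |u|), where β_{k₀}[t₀] = (D̃_{k₀} * (X - Σ_{k≠k₀} Z_k * D_k - Φ_{t₀}(Z_{k₀}) * D_{k₀}))[t₀]. -/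
/-- Convolutional sparse coding cost
`E(Z) = (1/2)‖X - Σ_k Z_k * D_k‖₂² + λ Σ_k ‖Z_k‖₁`, with convolutions of length-`W`
atoms evaluated on `⟦0, T-1⟧` and the ℓ₁ norm over `⟦0, L-1⟧`. -/
noncomputable def cE (P K W T L : ℕ) (lam : ℝ) (X : ℤ → Fin P → ℝ)
    (D : Fin K → ℤ → Fin P → ℝ) (Z : Fin K → ℤ → ℝ) : ℝ :=
  (1 / 2) * ∑ t ∈ Finset.Ico (0 : ℤ) T, ∑ p : Fin P,
      (X t p - ∑ k : Fin K, ∑ τ ∈ Finset.Ico (0 : ℤ) W, Z k (t - τ) * D k τ p) ^ 2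
  + lam * ∑ k : Fin K, ∑ t ∈ Finset.Ico (0 : ℤ) L, |Z k t|

/-- Squared ℓ₂ norm `‖D_k‖₂²` of a dictionary atom. -/
noncomputable def nrm2 (P W : ℕ) (Dk : ℤ → Fin P → ℝ) : ℝ :=
  ∑ τ ∈ Finset.Ico (0 : ℤ) W, ∑ p : Fin P, (Dk τ p) ^ 2

/-- `β_k[t] = (D̃_k * (X - Σ_{k'≠k} Z_{k'}*D_{k'} - Φ_t(Z_k)*D_k))[t]`
(cross-correlation of the atom `D_k` with the residual excluding coefficient `(k,t)`). -/
noncomputable def betaC (P K W : ℕ) (X : ℤ → Fin P → ℝ)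
    (D : Fin K → ℤ → Fin P → ℝ) (Z : Fin K → ℤ → ℝ) (k : Fin K) (t : ℤ) : ℝ :=
  ∑ s ∈ Finset.Ico (0 : ℤ) W, ∑ p : Fin P,
    D k s p * (X (t + s) p
      - ∑ k' ∈ Finset.univ.erase k, ∑ τ ∈ Finset.Ico (0 : ℤ) W,
          Z k' (t + s - τ) * D k' τ p
      - ∑ τ ∈ Finset.Ico (0 : ℤ) W,
          (if t + s - τ = t then 0 else Z k (t + s - τ)) * D k τ p)

/-
Changing the coefficient `Z_{k₀}[t₀]` from `c` to `u` changes the reconstruction `Σ_k Z_k * D_k`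
by `(u - c)` times the atom `D_{k₀}` translated to `t₀`. Writing `R` for the residual of the
reconstruction in which that coefficient is zeroed, the quadratic term is
`½‖R - v D_{k₀}(· - t₀)‖²` with `v = c` or `u`. Expanding the square: the translated atom lies
inside `⟦0, T-1⟧`, so its norm is `‖D_{k₀}‖²` and its correlation with `R` is `β_{k₀}[t₀]`.
In the ℓ₁ term only the summand at `(k₀, t₀)` changes, and `t₀ ≤ T - W = L - 1`.
-/

open Finset

def setCoeff {K : ℕ} (Z : Fin K → ℤ → ℝ) (k₀ : Fin K) (t₀ : ℤ) (v : ℝ) : Fin K → ℤ → ℝ :=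
  fun k t => if k = k₀ ∧ t = t₀ then v else Z k t

theorem setCoeff_self {K : ℕ} (Z : Fin K → ℤ → ℝ) (k₀ : Fin K) (t₀ : ℤ) :
    setCoeff Z k₀ t₀ (Z k₀ t₀) = Z := by
  ext k t
  unfold setCoeff
  split_ifs with h
  · rw [h.1, h.2]
  · rfl

theorem sum_sum_ite_and_eq {ι α M : Type*} [Fintype ι] [DecidableEq ι] [DecidableEq α]
    [AddCommMonoid M] (s : Finset α) (i₀ : ι) (t₀ : α) (f : ι → α → M) :
    ∑ i, ∑ t ∈ s, (if i = i₀ ∧ t = t₀ then f i t else 0) = if t₀ ∈ s then f i₀ t₀ else 0 := by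
  simp [ite_and, sum_ite_eq']

theorem sum_sum_comp_sub_sum_sum_comp_setCoeff {K : ℕ} (g : ℝ → ℝ) (Z : Fin K → ℤ → ℝ)
    (k₀ : Fin K) {s : Finset ℤ} {t₀ : ℤ} (ht₀ : t₀ ∈ s) (v : ℝ) :
    ∑ k, ∑ t ∈ s, g (Z k t) - ∑ k, ∑ t ∈ s, g (setCoeff Z k₀ t₀ v k t) = g (Z k₀ t₀) - g v := by
  have hpt : ∀ k t, g (Z k t) - g (setCoeff Z k₀ t₀ v k t)
      = if k = k₀ ∧ t = t₀ then g (Z k₀ t₀) - g v else 0 := by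
    intro k t
    unfold setCoeff
    split_ifs with h
    · rw [h.1, h.2]
    · exact sub_self _
  simp only [← sum_sub_distrib, hpt, sum_sum_ite_and_eq, ht₀, if_true]

theorem sum_Ico_eq_sum_Ico_add_of_eq_zero {M : Type*} [AddCommMonoid M] {a b t₀ : ℤ} {n : ℕ}
    (ha : a ≤ t₀) (hb : t₀ + n ≤ b) (g : ℤ → M) (hg : ∀ t, t < t₀ ∨ t₀ + n ≤ t → g t = 0) :
    ∑ t ∈ Ico a b, g t = ∑ s ∈ Ico (0 : ℤ) n, g (t₀ + s) := by
  rw [sum_Ico_add, zero_add, add_comm]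
  refine (sum_subset (Ico_subset_Ico ha hb) fun t hab ht => hg t ?_).symm
  rw [mem_Ico] at ht
  omega

/-- `(Σ_k Z_k * D_k)[t]`, channel `p`. -/
noncomputable def reconstruction {P K : ℕ} (W : ℕ) (D : Fin K → ℤ → Fin P → ℝ)
    (Z : Fin K → ℤ → ℝ) (t : ℤ) (p : Fin P) : ℝ :=
  ∑ k, ∑ τ ∈ Ico (0 : ℤ) W, Z k (t - τ) * D k τ p

theorem cE_eq_reconstruction {P K W T L : ℕ} (lam : ℝ) (X : ℤ → Fin P → ℝ)
    (D : Fin K → ℤ → Fin P → ℝ) (Z : Fin K → ℤ → ℝ) :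
    cE P K W T L lam X D Z
      = 1 / 2 * ∑ t ∈ Ico (0 : ℤ) T, ∑ p, (X t p - reconstruction W D Z t p) ^ 2
        + lam * ∑ k, ∑ t ∈ Ico (0 : ℤ) L, |Z k t| :=
  rfl

theorem reconstruction_setCoeff {P K W : ℕ} {D : Fin K → ℤ → Fin P → ℝ} {k₀ : Fin K}
    (hD : ∀ t, (t < 0 ∨ (W : ℤ) ≤ t) → ∀ p, D k₀ t p = 0)
    (Z : Fin K → ℤ → ℝ) (t₀ : ℤ) (v : ℝ) (t : ℤ) (p : Fin P) :
    reconstruction W D (setCoeff Z k₀ t₀ v) t p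
      = reconstruction W D (setCoeff Z k₀ t₀ 0) t p + v * D k₀ (t - t₀) p := by
  have hpt : ∀ k τ, setCoeff Z k₀ t₀ v k (t - τ) * D k τ p
      = setCoeff Z k₀ t₀ 0 k (t - τ) * D k τ p
        + if k = k₀ ∧ τ = t - t₀ then v * D k₀ (t - t₀) p else 0 := by
    intro k τ
    unfold setCoeff
    by_cases h : k = k₀ ∧ τ = t - t₀
    · rw [if_pos ⟨h.1, by omega⟩, if_pos ⟨h.1, by omega⟩, if_pos h, h.1, h.2]
      ring
    · have h' : ¬(k = k₀ ∧ t - τ = t₀) := fun h' => h ⟨h'.1, by omega⟩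
      simp only [if_neg h, if_neg h', add_zero]
  simp only [reconstruction, hpt, sum_add_distrib, sum_sum_ite_and_eq, add_right_inj]
  split_ifs with hmem
  · rfl
  · rw [mem_Ico] at hmem
    rw [hD _ (by omega), mul_zero]

theorem reconstruction_setCoeff_zero {P K W : ℕ} (D : Fin K → ℤ → Fin P → ℝ)
    (Z : Fin K → ℤ → ℝ) (k₀ : Fin K) (t₀ t : ℤ) (p : Fin P) :
    reconstruction W D (setCoeff Z k₀ t₀ 0) t p
      = ∑ k ∈ univ.erase k₀, ∑ τ ∈ Ico (0 : ℤ) W, Z k (t - τ) * D k τ p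
        + ∑ τ ∈ Ico (0 : ℤ) W, (if t - τ = t₀ then 0 else Z k₀ (t - τ)) * D k₀ τ p := by
  rw [reconstruction, ← add_sum_erase _ _ (mem_univ k₀), add_comm]
  congr 1
  · refine sum_congr rfl fun k hk => sum_congr rfl fun τ _ => ?_
    simp [setCoeff, ne_of_mem_erase hk]
  · simp [setCoeff]

theorem sum_sum_sq_sub_mul_sub_sum_sum_sq_sub_mul {ι κ : Type*} (s : Finset ι) (s' : Finset κ)
    (a d : ι → κ → ℝ) (c u : ℝ) :
    ∑ i ∈ s, ∑ j ∈ s', (a i j - c * d i j) ^ 2 - ∑ i ∈ s, ∑ j ∈ s', (a i j - u * d i j) ^ 2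
      = (c ^ 2 - u ^ 2) * ∑ i ∈ s, ∑ j ∈ s', d i j ^ 2
        - 2 * (c - u) * ∑ i ∈ s, ∑ j ∈ s', a i j * d i j := by
  simp only [← sum_sub_distrib, mul_sum]
  exact sum_congr rfl fun i _ => sum_congr rfl fun j _ => by ring

theorem sum_Ico_sum_sq_translate_eq_nrm2 {P W T : ℕ} {Dk : ℤ → Fin P → ℝ}
    (hD : ∀ t, (t < 0 ∨ (W : ℤ) ≤ t) → ∀ p, Dk t p = 0) {t₀ : ℤ} (ht₀ : 0 ≤ t₀)
    (ht₀' : t₀ + W ≤ T) :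
    ∑ t ∈ Ico (0 : ℤ) T, ∑ p, Dk (t - t₀) p ^ 2 = nrm2 P W Dk := by
  rw [sum_Ico_eq_sum_Ico_add_of_eq_zero ht₀ ht₀' _ fun t ht => by simp [hD (t - t₀) (by omega)]]
  simp [nrm2]

theorem sum_Ico_residual_mul_translate_eq_betaC {P K W T : ℕ} (X : ℤ → Fin P → ℝ)
    {D : Fin K → ℤ → Fin P → ℝ} {k₀ : Fin K}
    (hD : ∀ t, (t < 0 ∨ (W : ℤ) ≤ t) → ∀ p, D k₀ t p = 0) (Z : Fin K → ℤ → ℝ) {t₀ : ℤ}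
    (ht₀ : 0 ≤ t₀) (ht₀' : t₀ + W ≤ T) :
    ∑ t ∈ Ico (0 : ℤ) T, ∑ p,
        (X t p - reconstruction W D (setCoeff Z k₀ t₀ 0) t p) * D k₀ (t - t₀) p
      = betaC P K W X D Z k₀ t₀ := by
  rw [sum_Ico_eq_sum_Ico_add_of_eq_zero ht₀ ht₀' _ fun t ht => by simp [hD (t - t₀) (by omega)]]
  refine sum_congr rfl fun s _ => sum_congr rfl fun p _ => ?_
  rw [add_sub_cancel_left, reconstruction_setCoeff_zero]
  ring

theorem stmt5_general (P K W T L : ℕ) (hT : (T : ℤ) = (L : ℤ) + W - 1)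
    (lam : ℝ) (X : ℤ → Fin P → ℝ) (D : Fin K → ℤ → Fin P → ℝ)
    (hD : ∀ k (t : ℤ), (t < 0 ∨ (W : ℤ) ≤ t) → ∀ p, D k t p = 0)
    (Z : Fin K → ℤ → ℝ) (k0 : Fin K) (t0 : ℤ)
    (ht0 : 0 ≤ t0) (ht0' : t0 + W ≤ T) (u : ℝ) :
    cE P K W T L lam X D Z
      - cE P K W T L lam X D (fun k t => if k = k0 ∧ t = t0 then u else Z k t)
    = nrm2 P W (D k0) / 2 * ((Z k0 t0) ^ 2 - u ^ 2)
      - betaC P K W X D Z k0 t0 * (Z k0 t0 - u)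
      + lam * (|Z k0 t0| - |u|) := by
  set S := reconstruction W D (setCoeff Z k0 t0 0)
  have hresidual : ∀ v t p, X t p - reconstruction W D (setCoeff Z k0 t0 v) t p
      = (X t p - S t p) - v * D k0 (t - t0) p := fun v t p => by
    rw [reconstruction_setCoeff (hD k0)]; ring
  have hl1 := sum_sum_comp_sub_sum_sum_comp_setCoeff abs Z k0 (s := Ico 0 L) (t₀ := t0)
    (by rw [mem_Ico]; omega) u
  have hZ : reconstruction W D Z = reconstruction W D (setCoeff Z k0 t0 (Z k0 t0)) := by
    rw [setCoeff_self]
  change cE P K W T L lam X D Z - cE P K W T L lam X D (setCoeff Z k0 t0 u) = _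
  rw [cE_eq_reconstruction, cE_eq_reconstruction, hZ]
  simp only [hresidual]
  rw [← sum_Ico_sum_sq_translate_eq_nrm2 (hD k0) ht0 ht0',
    ← sum_Ico_residual_mul_translate_eq_betaC X (hD k0) Z ht0 ht0']
  linear_combination (1 / 2 : ℝ) * sum_sum_sq_sub_mul_sub_sum_sum_sq_sub_mul _ _
    (fun t p => X t p - S t p) (fun t p => D k0 (t - t0) p) (Z k0 t0) u + lam * hl1

/-- Single-coordinate cost variation: if `Z⁽¹⁾` agrees with `Z` except at `(k₀, t₀)`
where it takes value `u`, then
`E(Z) - E(Z⁽¹⁾) = (‖D_{k₀}‖₂²/2)(Z_{k₀}[t₀]² - u²) - β_{k₀}[t₀](Z_{k₀}[t₀] - u)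
  + λ(|Z_{k₀}[t₀]| - |u|)`. -/
theorem stmt5 (P K W T L : ℕ) (hW : 1 ≤ W) (hT : (T : ℤ) = (L : ℤ) + W - 1)
    (lam : ℝ) (X : ℤ → Fin P → ℝ) (D : Fin K → ℤ → Fin P → ℝ)
    (hD : ∀ k (t : ℤ), (t < 0 ∨ (W : ℤ) ≤ t) → ∀ p, D k t p = 0)
    (Z : Fin K → ℤ → ℝ) (k0 : Fin K) (t0 : ℤ)
    (ht0 : 0 ≤ t0) (ht0' : t0 + W ≤ T) (u : ℝ) :
    cE P K W T L lam X D Z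
      - cE P K W T L lam X D (fun k t => if k = k0 ∧ t = t0 then u else Z k t)
    = nrm2 P W (D k0) / 2 * ((Z k0 t0) ^ 2 - u ^ 2)
      - betaC P K W X D Z k0 t0 * (Z k0 t0 - u)
      + lam * (|Z k0 t0| - |u|) :=
  stmt5_general P K W T L hT lam X D hD Z k0 t0 ht0 ht0' u
end

section
/- With the same setting, if Z⁽¹⁾ differs from Z at exactly two coordinates (k₀,t₀) and (k₁,t₁) with t₀ ≠ t₁ (or k₀ ≠ k₁), taking values Z'_{k₀}[t₀] and Z'_{k₁}[t₁], then the total cost decrease decomposes as ΔE_{k₀k₁}[t₀,t₁] = ΔE_{k₀}[t₀] + ΔE_{k₁}[t₁] - S_{k₀,k₁}[t₀-t₁]·ΔZ_{k₀}[t₀]·ΔZ_{k₁}[t₁], where ΔZ_k[t] = Z_k[t] - Z'_k[t] and S_{k₀,k₁}[t] = (D̃_{k₀} * D_{k₁})[t]. -/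
/-- Cross-correlation `S_{k₀,k₁}[τ] = (D̃_{k₀} * D_{k₁})[τ] = Σ_t ⟨D_{k₀}[t], D_{k₁}[t+τ]⟩`. -/
noncomputable def Scorr (P W : ℕ) (D0 D1 : ℤ → Fin P → ℝ) (τ : ℤ) : ℝ :=
  ∑ t ∈ Finset.Ico (0 : ℤ) W, ∑ p : Fin P, D0 t p * D1 (t + τ) p

/-- Updating one coordinate changes the convolution affinely. -/
lemma conv_single (P K W : ℕ) (D : Fin K → ℤ → Fin P → ℝ)
    (hD : ∀ k (t : ℤ), (t < 0 ∨ (W : ℤ) ≤ t) → ∀ p, D k t p = 0)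
    (Z : Fin K → ℤ → ℝ) (k0 : Fin K) (t0 : ℤ) (u : ℝ) (t : ℤ) (p : Fin P) :
    ∑ k : Fin K, ∑ τ ∈ Finset.Ico (0 : ℤ) W,
        (if k = k0 ∧ t - τ = t0 then u else Z k (t - τ)) * D k τ p
    = (∑ k : Fin K, ∑ τ ∈ Finset.Ico (0 : ℤ) W, Z k (t - τ) * D k τ p)
      + (u - Z k0 t0) * D k0 (t - t0) p := by
  have h1 : ∀ k : Fin K, ∀ τ ∈ Finset.Ico (0:ℤ) (W:ℤ),
      (if k = k0 ∧ t - τ = t0 then u else Z k (t - τ)) * D k τ p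
      = Z k (t - τ) * D k τ p
        + (if τ = t - t0 then (if k = k0 then (u - Z k0 t0) * D k0 τ p else 0) else 0) := by
    intro k τ _
    by_cases hk : k = k0
    · subst hk
      by_cases hτ : τ = t - t0
      · subst hτ
        have h : t - (t - t0) = t0 := by ring
        simp [h]
        ring
      · have h : ¬ (t - τ = t0) := fun h => hτ (by omega)
        simp [h, hτ]
    · simp [hk]
  rw [Finset.sum_congr rfl fun k _ => Finset.sum_congr rfl (h1 k)]
  rw [Finset.sum_congr rfl fun k _ => Finset.sum_add_distrib, Finset.sum_add_distrib]
  congr 1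
  have h2 : ∀ k : Fin K,
      (∑ τ ∈ Finset.Ico (0:ℤ) (W:ℤ),
        if τ = t - t0 then (if k = k0 then (u - Z k0 t0) * D k0 τ p else 0) else 0)
      = if t - t0 ∈ Finset.Ico (0:ℤ) (W:ℤ) then
          (if k = k0 then (u - Z k0 t0) * D k0 (t - t0) p else 0) else 0 := by
    intro k
    exact Finset.sum_ite_eq' _ _ _
  rw [Finset.sum_congr rfl fun k _ => h2 k]
  by_cases hmem : t - t0 ∈ Finset.Ico (0:ℤ) (W:ℤ)
  · simp [hmem]
  · have : D k0 (t - t0) p = 0 := by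
      apply hD
      simp [Finset.mem_Ico] at hmem
      omega
    simp [hmem, this]

/-- Updating one coordinate changes the ℓ1 norm additively. -/
lemma l1_single (K L : ℕ) (Z : Fin K → ℤ → ℝ) (k0 : Fin K) (t0 : ℤ) (u : ℝ)
    (h : t0 ∈ Finset.Ico (0:ℤ) (L:ℤ)) :
    ∑ k : Fin K, ∑ t ∈ Finset.Ico (0:ℤ) (L:ℤ), |if k = k0 ∧ t = t0 then u else Z k t|
    = (∑ k : Fin K, ∑ t ∈ Finset.Ico (0:ℤ) (L:ℤ), |Z k t|) + (|u| - |Z k0 t0|) := by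
  have h1 : ∀ k : Fin K, ∀ t ∈ Finset.Ico (0:ℤ) (L:ℤ),
      |if k = k0 ∧ t = t0 then u else Z k t|
      = |Z k t| + (if t = t0 then (if k = k0 then |u| - |Z k0 t0| else 0) else 0) := by
    intro k t _
    by_cases hk : k = k0
    · subst hk
      by_cases ht : t = t0
      · subst ht; simp
      · simp [ht]
    · simp [hk]
  rw [Finset.sum_congr rfl fun k _ => Finset.sum_congr rfl (h1 k)]
  rw [Finset.sum_congr rfl fun k _ => Finset.sum_add_distrib, Finset.sum_add_distrib]
  congr 1
  rw [Finset.sum_congr rfl fun k _ => Finset.sum_ite_eq' _ _ _]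
  simp [h]

/-- Expansion of the quadratic part. -/
lemma expand2 (P : ℕ) (s : Finset ℤ) (r d0 d1 : ℤ → Fin P → ℝ) (a b : ℝ) :
    ∑ t ∈ s, ∑ p : Fin P, (r t p + a * d0 t p + b * d1 t p)^2
    = (∑ t ∈ s, ∑ p : Fin P, (r t p)^2)
      + 2*a*(∑ t ∈ s, ∑ p : Fin P, r t p * d0 t p)
      + 2*b*(∑ t ∈ s, ∑ p : Fin P, r t p * d1 t p)
      + 2*a*b*(∑ t ∈ s, ∑ p : Fin P, d0 t p * d1 t p)
      + a^2*(∑ t ∈ s, ∑ p : Fin P, d0 t p ^2)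
      + b^2*(∑ t ∈ s, ∑ p : Fin P, d1 t p ^2) := by
  simp only [Finset.mul_sum, ← Finset.sum_add_distrib]
  exact Finset.sum_congr rfl fun t _ => Finset.sum_congr rfl fun p _ => by ring

/-- Two-coordinate cost decomposition:
`ΔE_{k₀k₁}[t₀,t₁] = ΔE_{k₀}[t₀] + ΔE_{k₁}[t₁] - S_{k₀,k₁}[t₀-t₁]·ΔZ_{k₀}[t₀]·ΔZ_{k₁}[t₁]`. -/
theorem stmt6 (P K W T L : ℕ) (hW : 1 ≤ W) (hT : (T : ℤ) = (L : ℤ) + W - 1)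
    (lam : ℝ) (X : ℤ → Fin P → ℝ) (D : Fin K → ℤ → Fin P → ℝ)
    (hD : ∀ k (t : ℤ), (t < 0 ∨ (W : ℤ) ≤ t) → ∀ p, D k t p = 0)
    (Z : Fin K → ℤ → ℝ) (k0 k1 : Fin K) (t0 t1 : ℤ)
    (hne : (k0, t0) ≠ (k1, t1))
    (ht0 : 0 ≤ t0) (ht0' : t0 + W ≤ T) (ht1 : 0 ≤ t1) (ht1' : t1 + W ≤ T)
    (u0 u1 : ℝ) :
    cE P K W T L lam X D Z
      - cE P K W T L lam X D (fun k t =>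
          if k = k0 ∧ t = t0 then u0 else if k = k1 ∧ t = t1 then u1 else Z k t)
    = (cE P K W T L lam X D Z
        - cE P K W T L lam X D (fun k t => if k = k0 ∧ t = t0 then u0 else Z k t))
      + (cE P K W T L lam X D Z
        - cE P K W T L lam X D (fun k t => if k = k1 ∧ t = t1 then u1 else Z k t))
      - Scorr P W (D k0) (D k1) (t0 - t1) * (Z k0 t0 - u0) * (Z k1 t1 - u1) := by
  have hne' : ¬ (k0 = k1 ∧ t0 = t1) := by
    intro ⟨h1, h2⟩; exact hne (by simp [h1, h2])
  have hL0 : t0 ∈ Finset.Ico (0:ℤ) (L:ℤ) := by simp only [Finset.mem_Ico]; omega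
  have hL1 : t1 ∈ Finset.Ico (0:ℤ) (L:ℤ) := by simp only [Finset.mem_Ico]; omega
  -- convolution rewrites
  have hC2 : ∀ (t : ℤ) (p : Fin P),
      (∑ k : Fin K, ∑ τ ∈ Finset.Ico (0:ℤ) (W:ℤ),
        (if k = k0 ∧ t - τ = t0 then u0
          else if k = k1 ∧ t - τ = t1 then u1 else Z k (t - τ)) * D k τ p)
      = (∑ k : Fin K, ∑ τ ∈ Finset.Ico (0:ℤ) (W:ℤ), Z k (t - τ) * D k τ p)
        + (u1 - Z k1 t1) * D k1 (t - t1) p + (u0 - Z k0 t0) * D k0 (t - t0) p := by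
    intro t p
    have h := conv_single P K W D hD
      (fun k t => if k = k1 ∧ t = t1 then u1 else Z k t) k0 t0 u0 t p
    rw [h, conv_single P K W D hD Z k1 t1 u1 t p]
    simp [hne']
  -- cross-correlation
  have hS : (∑ t ∈ Finset.Ico (0:ℤ) (T:ℤ), ∑ p : Fin P,
        (fun t p => D k0 (t - t0) p) t p * (fun t p => D k1 (t - t1) p) t p)
      = Scorr P W (D k0) (D k1) (t0 - t1) := by
    have hsub : Finset.Ico t0 (t0 + W) ⊆ Finset.Ico (0:ℤ) (T:ℤ) := by
      intro x hx; simp only [Finset.mem_Ico] at hx ⊢; omega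
    have hzero : ∀ x ∈ Finset.Ico (0:ℤ) (T:ℤ), x ∉ Finset.Ico t0 (t0 + W) →
        (∑ p : Fin P, D k0 (x - t0) p * D k1 (x - t1) p) = 0 := by
      intro x _ hx
      apply Finset.sum_eq_zero
      intro p _
      have : D k0 (x - t0) p = 0 := by
        apply hD; simp only [Finset.mem_Ico] at hx; omega
      rw [this, zero_mul]
    simp only []
    rw [← Finset.sum_subset hsub hzero]
    unfold Scorr
    rw [show Finset.Ico t0 (t0 + (W:ℤ)) = Finset.map (addLeftEmbedding t0)
        (Finset.Ico (0:ℤ) (W:ℤ)) by rw [Finset.map_add_left_Ico]; ring_nf,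
      Finset.sum_map]
    apply Finset.sum_congr rfl
    intro s _
    apply Finset.sum_congr rfl
    intro p _
    simp only [addLeftEmbedding_apply]
    rw [show t0 + s - t0 = s by ring, show t0 + s - t1 = s + (t0 - t1) by ring]
  -- expand everything
  simp only [cE]
  -- quadratic parts
  have e0 := expand2 P (Finset.Ico (0:ℤ) (T:ℤ))
      (fun t p => X t p - ∑ k : Fin K, ∑ τ ∈ Finset.Ico (0:ℤ) (W:ℤ),
        Z k (t - τ) * D k τ p)
      (fun t p => D k0 (t - t0) p) (fun t p => D k1 (t - t1) p) (Z k0 t0 - u0) 0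
  have e1 := expand2 P (Finset.Ico (0:ℤ) (T:ℤ))
      (fun t p => X t p - ∑ k : Fin K, ∑ τ ∈ Finset.Ico (0:ℤ) (W:ℤ),
        Z k (t - τ) * D k τ p)
      (fun t p => D k0 (t - t0) p) (fun t p => D k1 (t - t1) p) 0 (Z k1 t1 - u1)
  have e2 := expand2 P (Finset.Ico (0:ℤ) (T:ℤ))
      (fun t p => X t p - ∑ k : Fin K, ∑ τ ∈ Finset.Ico (0:ℤ) (W:ℤ),
        Z k (t - τ) * D k τ p)
      (fun t p => D k0 (t - t0) p) (fun t p => D k1 (t - t1) p)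
      (Z k0 t0 - u0) (Z k1 t1 - u1)
  have q0 : ∑ t ∈ Finset.Ico (0:ℤ) (T:ℤ), ∑ p : Fin P,
      (X t p - ∑ k : Fin K, ∑ τ ∈ Finset.Ico (0:ℤ) (W:ℤ),
        (if k = k0 ∧ t - τ = t0 then u0 else Z k (t - τ)) * D k τ p) ^ 2
      = ∑ t ∈ Finset.Ico (0:ℤ) (T:ℤ), ∑ p : Fin P,
        ((fun t p => X t p - ∑ k : Fin K, ∑ τ ∈ Finset.Ico (0:ℤ) (W:ℤ),
          Z k (t - τ) * D k τ p) t p + (Z k0 t0 - u0) * (fun t p => D k0 (t - t0) p) t p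
          + (0:ℝ) * (fun t p => D k1 (t - t1) p) t p)^2 := by
    apply Finset.sum_congr rfl; intro t _
    apply Finset.sum_congr rfl; intro p _
    rw [conv_single P K W D hD Z k0 t0 u0 t p]
    ring
  have q1 : ∑ t ∈ Finset.Ico (0:ℤ) (T:ℤ), ∑ p : Fin P,
      (X t p - ∑ k : Fin K, ∑ τ ∈ Finset.Ico (0:ℤ) (W:ℤ),
        (if k = k1 ∧ t - τ = t1 then u1 else Z k (t - τ)) * D k τ p) ^ 2
      = ∑ t ∈ Finset.Ico (0:ℤ) (T:ℤ), ∑ p : Fin P,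
        ((fun t p => X t p - ∑ k : Fin K, ∑ τ ∈ Finset.Ico (0:ℤ) (W:ℤ),
          Z k (t - τ) * D k τ p) t p + (0:ℝ) * (fun t p => D k0 (t - t0) p) t p
          + (Z k1 t1 - u1) * (fun t p => D k1 (t - t1) p) t p)^2 := by
    apply Finset.sum_congr rfl; intro t _
    apply Finset.sum_congr rfl; intro p _
    rw [conv_single P K W D hD Z k1 t1 u1 t p]
    ring
  have q2 : ∑ t ∈ Finset.Ico (0:ℤ) (T:ℤ), ∑ p : Fin P,
      (X t p - ∑ k : Fin K, ∑ τ ∈ Finset.Ico (0:ℤ) (W:ℤ),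
        (if k = k0 ∧ t - τ = t0 then u0
          else if k = k1 ∧ t - τ = t1 then u1 else Z k (t - τ)) * D k τ p) ^ 2
      = ∑ t ∈ Finset.Ico (0:ℤ) (T:ℤ), ∑ p : Fin P,
        ((fun t p => X t p - ∑ k : Fin K, ∑ τ ∈ Finset.Ico (0:ℤ) (W:ℤ),
          Z k (t - τ) * D k τ p) t p
          + (Z k0 t0 - u0) * (fun t p => D k0 (t - t0) p) t p
          + (Z k1 t1 - u1) * (fun t p => D k1 (t - t1) p) t p)^2 := by
    apply Finset.sum_congr rfl; intro t _
    apply Finset.sum_congr rfl; intro p _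
    rw [hC2 t p]
    ring
  -- l1 parts
  have l0 := l1_single K L Z k0 t0 u0 hL0
  have l1' := l1_single K L Z k1 t1 u1 hL1
  have l2 : ∑ k : Fin K, ∑ t ∈ Finset.Ico (0:ℤ) (L:ℤ),
      |if k = k0 ∧ t = t0 then u0 else if k = k1 ∧ t = t1 then u1 else Z k t|
      = (∑ k : Fin K, ∑ t ∈ Finset.Ico (0:ℤ) (L:ℤ), |Z k t|)
        + (|u1| - |Z k1 t1|) + (|u0| - |Z k0 t0|) := by
    have h := l1_single K L (fun k t => if k = k1 ∧ t = t1 then u1 else Z k t) k0 t0 u0 hL0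
    rw [h, l1_single K L Z k1 t1 u1 hL1]
    simp [hne']
  rw [q0, q1, q2, e0, e1, e2, l0, l1', l2, hS]
  ring
end

section
/- Let F : ℝⁿ → ℝ be a smooth convex function with bounded Hessian entries, let gᵢ : ℝ → ℝ be convex, and define E(u) = F(u) + Σᵢ gᵢ(uᵢ). Suppose E is strictly convex in each coordinate separately. Then u* ∈ ℝⁿ is a global minimizer of E if and only if for every i, u*ᵢ minimizes the one-dimensional function t ↦ E(u*₁,…,u*_{i-1}, t, u*_{i+1},…,u*ₙ). -/
/-!
Write `E = F + G` with `G v = ∑ i, gᵢ (vᵢ)`. If `u` minimizes `E` along the `i`-th coordinate,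
then along the segment from `uᵢ` to any `t`, `F` plus the chord of the convex `gᵢ` is minimal at
`uᵢ`; its one-sided derivative there is nonnegative, which says that `uᵢ` also minimizes the
linearization `t ↦ ∂ᵢF(u) t + gᵢ t`. These linearizations add up to `DF(u) + G`, which `u`
therefore minimizes, and the gradient inequality `F u + DF(u) (v - u) ≤ F v` of the convex `F`
carries this over to `F + G`.
-/

open Set Function

section
variable {E : Type*} [NormedAddCommGroup E] [NormedSpace ℝ E] {f g : E → ℝ} {f' : E →L[ℝ] ℝ} {a : E}

theorem IsMinOn.fderiv_add_of_convexOn (hmin : IsMinOn (f + g) univ a) (hf : HasFDerivAt f f' a)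
    (hg : ConvexOn ℝ univ g) : IsMinOn (⇑f' + g) univ a := by
  intro x _
  -- Along the segment from `a` to `x`, `f` plus the chord of `g` is minimal at `a`.
  set ψ : ℝ → ℝ := fun s => f (a + s • (x - a)) + s * (g x - g a)
  have hψ : HasDerivAt ψ (f' (x - a) + (g x - g a)) 0 := by
    have hline : HasDerivAt (fun s : ℝ => a + s • (x - a)) (x - a) 0 := by
      simpa using ((hasDerivAt_id (0 : ℝ)).smul_const (x - a)).const_add a
    have hf₀ : HasFDerivAt f f' (a + (0 : ℝ) • (x - a)) := by simpa using hf
    have h := (hf₀.comp_hasDerivAt 0 hline).add ((hasDerivAt_id (0 : ℝ)).mul_const (g x - g a))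
    rwa [one_mul] at h
  have hψmin : IsMinOn ψ (Icc 0 1) 0 := by
    rintro s ⟨hs0, hs1⟩
    have hconv := hg.2 (mem_univ a) (mem_univ x) (sub_nonneg.2 hs1) hs0 (sub_add_cancel 1 s)
    have hseg : (1 - s) • a + s • x = a + s • (x - a) := by module
    rw [hseg, smul_eq_mul, smul_eq_mul] at hconv
    have hle := hmin (mem_univ (a + s • (x - a)))
    simp only [mem_ofPred_eq, Pi.add_apply] at hle ⊢
    simp only [ψ, zero_smul, add_zero, zero_mul]
    linarith
  have hslope := hψmin.localize.hasFDerivWithinAt_nonneg hψ.hasFDerivAt.hasFDerivWithinAt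
    (mem_posTangentConeAt_of_segment_subset (y := (1 : ℝ)) (by simp [segment_eq_Icc]))
  simp only [ContinuousLinearMap.toSpanSingleton_apply, one_smul, map_sub] at hslope
  simp only [mem_ofPred_eq, Pi.add_apply]
  linarith

theorem ConvexOn.add_fderiv_sub_le (hf : ConvexOn ℝ univ f) (hf' : HasFDerivAt f f' a) (x : E) :
    f a + f' (x - a) ≤ f x := by
  -- `a` minimizes the constant function `-f + f`.
  have hmin : IsMinOn (-f + f) univ a := fun x _ => by simp
  have := hmin.fderiv_add_of_convexOn hf'.neg hf (mem_univ x)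
  simp only [mem_ofPred_eq, Pi.add_apply, neg_apply] at this
  rw [map_sub]
  linarith

theorem IsMinOn.add_of_fderiv_add (hmin : IsMinOn (⇑f' + g) univ a) (hf : ConvexOn ℝ univ f)
    (hf' : HasFDerivAt f f' a) : IsMinOn (f + g) univ a := by
  intro x _
  have hlin := hmin (mem_univ x)
  have hgrad := hf.add_fderiv_sub_le hf' x
  simp only [mem_ofPred_eq, Pi.add_apply, map_sub] at hlin hgrad ⊢
  linarith

end

section
variable {ι : Type*} [Fintype ι] [DecidableEq ι]

theorem Finset.sum_apply_update_add {α : ι → Type*} {M : Type*} [AddCommMonoid M]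
    (g : ∀ i, α i → M) (u : ∀ i, α i) (i : ι) (t : α i) :
    ∑ j, g j (update u i t j) + g i (u i) = ∑ j, g j (u j) + g i t := by
  rw [Finset.sum_congr rfl fun j _ => apply_update g u i t j,
    Finset.sum_update_of_mem (Finset.mem_univ i), ← Finset.add_sum_erase _ _ (Finset.mem_univ i),
    Finset.sdiff_singleton_eq_erase]
  abel

variable {E : ι → Type*} [∀ i, NormedAddCommGroup (E i)] [∀ i, NormedSpace ℝ (E i)]
  {F : (∀ i, E i) → ℝ} {F' : (∀ i, E i) →L[ℝ] ℝ} {g : ∀ i, E i → ℝ} {u : ∀ i, E i}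

theorem isMinOn_fderiv_single_add (hF : HasFDerivAt F F' u) {i : ι} (hg : ConvexOn ℝ univ (g i))
    (hmin : ∀ t, F u + ∑ j, g j (u j) ≤ F (update u i t) + ∑ j, g j (update u i t j)) :
    IsMinOn (fun t => F' (Pi.single i t) + g i t) univ (u i) := by
  have hφ : HasFDerivAt (fun t => F (update u i t))
      (F'.comp (.pi (Pi.single i (.id ℝ (E i))))) (u i) := by
    rw [← update_eq_self i u] at hF
    exact hF.comp (u i) (hasFDerivAt_update u (u i))
  have hφmin : IsMinOn ((fun t => F (update u i t)) + g i) univ (u i) := fun t _ => by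
    have := Finset.sum_apply_update_add g u i t
    simp only [mem_ofPred_eq, Pi.add_apply, update_eq_self]
    linarith [hmin t]
  have hsingle (t : E i) : ContinuousLinearMap.pi (Pi.single i (.id ℝ (E i))) t = Pi.single i t := by
    ext j
    rcases eq_or_ne j i with rfl | hj <;> simp [*]
  intro t ht
  simpa [hsingle] using hφmin.fderiv_add_of_convexOn hφ hg ht

theorem isMinOn_add_sum_of_forall_update (hF : ConvexOn ℝ univ F) (hF' : HasFDerivAt F F' u)
    (hg : ∀ i, ConvexOn ℝ univ (g i))
    (hmin : ∀ i t, F u + ∑ j, g j (u j) ≤ F (update u i t) + ∑ j, g j (update u i t j)) :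
    IsMinOn (F + fun v => ∑ i, g i (v i)) univ u := by
  refine IsMinOn.add_of_fderiv_add (fun v _ => ?_) hF hF'
  have hsplit : ∀ w, F' w + ∑ i, g i (w i) = ∑ i, (F' (Pi.single i (w i)) + g i (w i)) := by
    intro w
    rw [Finset.sum_add_distrib, ← map_sum, Finset.univ_sum_single]
  simp only [mem_ofPred_eq, Pi.add_apply, hsplit]
  exact Finset.sum_le_sum fun i _ => isMinOn_fderiv_single_add hF' (hg i) (hmin i) (mem_univ (v i))

end

theorem stmt9_general (n : ℕ) (F : (Fin n → ℝ) → ℝ) (g : Fin n → ℝ → ℝ)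
    (hF : Differentiable ℝ F) (hFc : ConvexOn ℝ Set.univ F)
    (hg : ∀ i, ConvexOn ℝ Set.univ (g i))
    (E : (Fin n → ℝ) → ℝ) (hE : ∀ u, E u = F u + ∑ i, g i (u i))
    (u : Fin n → ℝ) :
    (∀ v, E u ≤ E v) ↔ ∀ i, ∀ t : ℝ, E u ≤ E (Function.update u i t) := by
  refine ⟨fun h i t => h _, fun hcoord v => ?_⟩
  have hmin := isMinOn_add_sum_of_forall_update hFc (hF u).hasFDerivAt hg
    (fun i t => by simpa only [hE] using hcoord i t) (mem_univ v)
  simpa only [mem_ofPred_eq, Pi.add_apply, hE] using hmin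

/-- Coordinate-wise optimality characterization (Osher–Li): for
`E(u) = F(u) + Σᵢ gᵢ(uᵢ)` with `F` smooth convex, `gᵢ` convex, and `E` strictly
convex in each coordinate, `u*` is a global minimizer of `E` iff each coordinate
`u*ᵢ` minimizes `E` along its own coordinate direction. -/
theorem stmt9 (n : ℕ) (F : (Fin n → ℝ) → ℝ) (g : Fin n → ℝ → ℝ)
    (hF : Differentiable ℝ F) (hFc : ConvexOn ℝ Set.univ F)
    (hg : ∀ i, ConvexOn ℝ Set.univ (g i))
    (E : (Fin n → ℝ) → ℝ) (hE : ∀ u, E u = F u + ∑ i, g i (u i))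
    (hstrict : ∀ (x : Fin n → ℝ) (i : Fin n),
      StrictConvexOn ℝ Set.univ (fun t : ℝ => E (Function.update x i t)))
    (u : Fin n → ℝ) :
    (∀ v, E u ≤ E v) ↔ ∀ i, ∀ t : ℝ, E u ≤ E (Function.update u i t) :=
  stmt9_general n F g hF hFc hg E hE u
end
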